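/- arXiv:1406.3077 — 2 statements merged into one kernel-verified Lean document; each statement's English description precedes it below -/
import Mathlib

section
/- Let f(n) denote the maximum number of sets of cardinality at least 2 in a 2-laminar family of subsets of [n]. Then limsup_{n→∞} f(n)/binom(n,2) ≤ 1.3821. -/
/-!
Call a family *rooted* at `S` if it contains `S` and all its members lie in `S`. By induction on
`|S|`, a rooted 2-laminar family of sets of size at least 2 has at most
`1.3821 * C(|S|,2) - slack |S|` members. Below the root, the maximal members meet pairwise in at
most one point, so they cover disjoint sets of pairs and the induction hypothesis applies to each
of them. If some pair of `S` is left uncovered, it pays for the root, as `1.3821 ≥ 1 + slack`.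
Otherwise the maximal members are the lines of a linear space on `S`; there are at least `|S|` of
them by de Bruijn–Erdős, and their slacks add up to at least `1 + slack |S|`: for `|S| ≤ 7` this is a
finite check, for `|S| ≥ 8` it follows from Cauchy–Schwarz.
-/

/-- `f n` is the maximum number of sets of cardinality at least `2` in a `2`-laminar
family of subsets of `[n]`. -/
noncomputable def f (n : ℕ) : ℕ :=
  sSup {m | ∃ F : Finset (Finset (Fin n)),
    (∀ A ∈ F, ∀ B ∈ F, 2 ≤ (A ∩ B).card → A ⊆ B ∨ B ⊆ A) ∧
    (∀ A ∈ F, 2 ≤ A.card) ∧ F.card = m}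

open Finset

variable {α : Type*}

def IsLaminar [DecidableEq α] (t : ℕ) (F : Finset (Finset α)) : Prop :=
  ∀ A ∈ F, ∀ B ∈ F, t ≤ #(A ∩ B) → A ⊆ B ∨ B ⊆ A

open Classical in
noncomputable def maximalMembers (F : Finset (Finset α)) : Finset (Finset α) :=
  F.filter (Maximal (· ∈ F))

section Laminar

variable {t : ℕ} {F G : Finset (Finset α)} {M M' : Finset α}

lemma mem_maximalMembers : M ∈ maximalMembers F ↔ Maximal (· ∈ F) M := by
  classical
  simp only [maximalMembers, mem_filter, and_iff_right_iff_imp]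
  exact fun h => h.prop

lemma maximalMembers_subset (F : Finset (Finset α)) : maximalMembers F ⊆ F :=
  fun _ hM => (mem_maximalMembers.1 hM).prop

lemma exists_mem_maximalMembers_superset {A : Finset α} (hA : A ∈ F) :
    ∃ M ∈ maximalMembers F, A ⊆ M := by
  obtain ⟨M, hAM, hM⟩ := F.exists_le_maximal hA
  exact ⟨M, mem_maximalMembers.2 hM, hAM⟩

namespace IsLaminar

variable [DecidableEq α]

lemma mono (hF : IsLaminar t F) (hGF : G ⊆ F) : IsLaminar t G :=
  fun A hA B hB => hF A (hGF hA) B (hGF hB)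

lemma insert_of_forall_subset {S : Finset α} (hF : IsLaminar t F)
    (hS : ∀ A ∈ F, A ⊆ S) : IsLaminar t (insert S F) := by
  intro A hA B hB hAB
  rw [mem_insert] at hA hB
  rcases hA with rfl | hA <;> rcases hB with rfl | hB
  · exact .inl subset_rfl
  · exact .inr (hS B hB)
  · exact .inl (hS A hA)
  · exact hF A hA B hB hAB

lemma card_inter_lt_of_mem_maximalMembers (hF : IsLaminar t F) (hM : M ∈ maximalMembers F)
    (hM' : M' ∈ maximalMembers F) (hne : M ≠ M') : #(M ∩ M') < t := by
  rw [mem_maximalMembers] at hM hM'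
  by_contra! h
  rcases hF M hM.prop M' hM'.prop h with h | h
  · exact hne (hM.eq_of_le hM'.prop h)
  · exact hne (hM'.eq_of_le hM.prop h).symm

lemma card_eq_sum_card_filter_subset (hF : IsLaminar t F)
    (ht : ∀ A ∈ F, t ≤ #A) :
    #F = ∑ M ∈ maximalMembers F, #(F.filter (· ⊆ M)) := by
  have hcover : (maximalMembers F).biUnion (fun M => F.filter (· ⊆ M)) = F := by
    ext A
    simp only [mem_biUnion, mem_filter]
    constructor
    · rintro ⟨_, _, hA, _⟩
      exact hA
    · intro hA
      obtain ⟨M, hM, hAM⟩ := exists_mem_maximalMembers_superset hA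
      exact ⟨M, hM, hA, hAM⟩
  rw [← card_biUnion, hcover]
  intro M hM M' hM' hne
  refine disjoint_left.2 fun A hA hA' => ?_
  have hA_sub : A ⊆ M ∩ M' := subset_inter (mem_filter.1 hA).2 (mem_filter.1 hA').2
  have := hF.card_inter_lt_of_mem_maximalMembers hM hM' hne
  have := card_le_card hA_sub
  have := ht A (mem_filter.1 hA).1
  omega

end IsLaminar

end Laminar

section Pairs

variable [DecidableEq α] {S : Finset α} {L : Finset (Finset α)}

lemma card_biUnion_powersetCard_two
    (hL : (L : Set (Finset α)).Pairwise fun l l' => #(l ∩ l') ≤ 1) :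
    #(L.biUnion (powersetCard 2)) = ∑ l ∈ L, (#l).choose 2 := by
  rw [card_biUnion]
  · simp only [card_powersetCard]
  intro l hl l' hl' hne
  refine disjoint_left.2 fun e he he' => ?_
  rw [mem_powersetCard] at he he'
  have := card_le_card (subset_inter he.1 he'.1)
  have := hL hl hl' hne
  omega

lemma biUnion_powersetCard_two_subset (hsub : ∀ l ∈ L, l ⊆ S) :
    L.biUnion (powersetCard 2) ⊆ S.powersetCard 2 :=
  biUnion_subset.2 fun l hl => powersetCard_mono (hsub l hl)

lemma sum_choose_two_le (hsub : ∀ l ∈ L, l ⊆ S)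
    (hL : (L : Set (Finset α)).Pairwise fun l l' => #(l ∩ l') ≤ 1) :
    ∑ l ∈ L, (#l).choose 2 ≤ (#S).choose 2 := by
  rw [← card_biUnion_powersetCard_two hL, ← card_powersetCard]
  exact card_le_card (biUnion_powersetCard_two_subset hsub)

lemma exists_mem_mem_of_sum_choose_two_eq (hsub : ∀ l ∈ L, l ⊆ S)
    (hL : (L : Set (Finset α)).Pairwise fun l l' => #(l ∩ l') ≤ 1)
    (hsum : ∑ l ∈ L, (#l).choose 2 = (#S).choose 2) {x y : α} (hx : x ∈ S) (hy : y ∈ S)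
    (hxy : x ≠ y) : ∃ l ∈ L, x ∈ l ∧ y ∈ l := by
  have hall : L.biUnion (powersetCard 2) = S.powersetCard 2 :=
    eq_of_subset_of_card_le (biUnion_powersetCard_two_subset hsub) <| by
      rw [card_biUnion_powersetCard_two hL, card_powersetCard, hsum]
  have hpair : {x, y} ∈ L.biUnion (powersetCard 2) := by
    rw [hall, mem_powersetCard]
    exact ⟨insert_subset hx (singleton_subset_iff.2 hy), card_pair hxy⟩
  obtain ⟨l, hl, hxyl⟩ := mem_biUnion.1 hpair
  have hxyl := (mem_powersetCard.1 hxyl).1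
  exact ⟨l, hl, hxyl (mem_insert_self x {y}), hxyl (mem_insert_of_mem (mem_singleton_self y))⟩

/-- de Bruijn–Erdős. -/
theorem card_le_card_of_forall_exists_mem_mem (hS : S.Nontrivial) (hsub : ∀ l ∈ L, l ⊂ S)
    (hL : (L : Set (Finset α)).Pairwise fun l l' => #(l ∩ l') ≤ 1)
    (hcover : ∀ x ∈ S, ∀ y ∈ S, x ≠ y → ∃ l ∈ L, x ∈ l ∧ y ∈ l) : #S ≤ #L := by
  have eq_of_mem_mem : ∀ l ∈ L, ∀ l' ∈ L, ∀ x y, x ≠ y → x ∈ l → y ∈ l → x ∈ l' → y ∈ l' →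
      l = l' := by
    intro l hl l' hl' x y hxy hxl hyl hxl' hyl'
    by_contra hne
    have := hL hl hl' hne
    have := one_lt_card.2 ⟨x, mem_inter.2 ⟨hxl, hxl'⟩, y, mem_inter.2 ⟨hyl, hyl'⟩, hxy⟩
    omega
  let _ : Membership {x // x ∈ S} {l // l ∈ L} := ⟨fun l p => p.1 ∈ l.1⟩
  have hLines : Configuration.HasLines {x // x ∈ S} {l // l ∈ L} :=
    { exists_point := fun l => by
        obtain ⟨x, hxS, hxl⟩ := exists_of_ssubset (hsub l.1 l.2)
        exact ⟨⟨x, hxS⟩, hxl⟩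
      exists_line := fun p => by
        -- the line through `q` and a point `r` off the line `pq` misses `p`
        obtain ⟨q, hqS, hqp⟩ := hS.exists_ne p.1
        obtain ⟨l₀, hl₀, hpl₀, hql₀⟩ := hcover p.1 p.2 q hqS hqp.symm
        obtain ⟨r, hrS, hrl₀⟩ := exists_of_ssubset (hsub l₀ hl₀)
        obtain ⟨l, hl, hql, hrl⟩ := hcover q hqS r hrS (ne_of_mem_of_not_mem hql₀ hrl₀)
        refine ⟨⟨l, hl⟩, fun hpl => hrl₀ ?_⟩
        rwa [← eq_of_mem_mem l hl l₀ hl₀ p.1 q hqp.symm hpl hql hpl₀ hql₀]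
      eq_or_eq := fun {p₁ p₂ l₁ l₂} h₁ h₂ h₃ h₄ => by
        by_cases hp : p₁ = p₂
        · exact .inl hp
        · exact .inr (Subtype.ext (eq_of_mem_mem _ l₁.2 _ l₂.2 _ _
            (fun h => hp (Subtype.ext h)) h₁ h₂ h₃ h₄))
      mkLine := fun {p₁ p₂} h =>
        ⟨_, (hcover p₁.1 p₁.2 p₂.1 p₂.2 fun e => h (Subtype.ext e)).choose_spec.1⟩
      mkLine_ax := fun {p₁ p₂} h =>
        (hcover p₁.1 p₁.2 p₂.1 p₂.2 fun e => h (Subtype.ext e)).choose_spec.2 }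
  simpa using Configuration.HasLines.card_le {x // x ∈ S} {l // l ∈ L}

end Pairs

/-- `slack 2 = 0.3821` makes the bound exact for a single pair, and `slack 3 = 1.0241 / 7 = 0.1463`
is as large as the triangle (three lines of size 2 on three points) allows. -/
noncomputable def slack (s : ℕ) : ℝ :=
  if s ≤ 2 then 0.3821 else 1.0241 / (2 * s.choose 2 + 1)

section Slack

lemma slack_of_three_le {s : ℕ} (hs : 3 ≤ s) : slack s = 1.0241 / (2 * s.choose 2 + 1) :=
  if_neg (by omega)

lemma slack_nonneg (s : ℕ) : 0 ≤ slack s := by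
  unfold slack
  split_ifs <;> positivity

lemma slack_le (s : ℕ) : slack s ≤ 0.3821 := by
  rcases le_or_gt s 2 with hs | hs
  · simp [slack, hs]
  · have h3 : (3 : ℝ) ≤ s.choose 2 := by
      exact_mod_cast (Nat.choose_le_choose 2 hs : Nat.choose 3 2 ≤ _)
    rw [slack_of_three_le hs, div_le_iff₀ (by positivity)]
    linarith

lemma div_le_slack {s : ℕ} (hs : 2 ≤ s) : 1.0241 / (2 * s.choose 2 + 1) ≤ slack s := by
  rcases hs.eq_or_lt with rfl | hs
  · norm_num [slack]
  · rw [slack_of_three_le hs]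

lemma linear_le_slack {s : ℕ} (hs : 2 ≤ s) :
    0.3821 * s.choose 2 - ((s.choose 2 : ℝ) - 1) / 2 ≤ slack s := by
  rcases le_or_gt s 3 with hs3 | hs4
  · interval_cases s <;> norm_num [slack]
  · have h6 : (6 : ℝ) ≤ s.choose 2 := by
      exact_mod_cast (Nat.choose_le_choose 2 hs4 : Nat.choose 4 2 ≤ _)
    linarith [slack_nonneg s]

variable {ι : Type*} {L : Finset ι} {s : ι → ℕ} {b : ℕ}

lemma one_add_slack_le_sum_slack_of_le_seven (hb : 3 ≤ b) (hb7 : b ≤ 7)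
    (hs : ∀ i ∈ L, 2 ≤ s i) (hsum : ∑ i ∈ L, (s i).choose 2 = b.choose 2) (hcard : b ≤ #L) :
    1 + slack b ≤ ∑ i ∈ L, slack (s i) := by
  have hsumR : ∑ i ∈ L, ((s i).choose 2 : ℝ) = b.choose 2 := by exact_mod_cast hsum
  have hcardR : (b : ℝ) ≤ #L := by exact_mod_cast hcard
  have hlin : 0.3821 * b.choose 2 - ((b.choose 2 : ℝ) - #L) / 2 ≤ ∑ i ∈ L, slack (s i) :=
    calc 0.3821 * b.choose 2 - ((b.choose 2 : ℝ) - #L) / 2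
        = ∑ i ∈ L, (0.3821 * (s i).choose 2 - (((s i).choose 2 : ℝ) - 1) / 2) := by
          rw [sum_sub_distrib, ← mul_sum, ← sum_div, sum_sub_distrib, hsumR]
          simp
      _ ≤ ∑ i ∈ L, slack (s i) := sum_le_sum fun i hi => linear_le_slack (hs i hi)
  have hsmall : 1 + slack b ≤ 0.3821 * b.choose 2 - ((b.choose 2 : ℝ) - b) / 2 := by
    interval_cases b <;> norm_num [slack, Nat.choose_two_right]
  linarith

lemma one_add_slack_le_sum_slack_of_eight_le (hb : 8 ≤ b)
    (hs : ∀ i ∈ L, 2 ≤ s i) (hsum : ∑ i ∈ L, (s i).choose 2 = b.choose 2) (hcard : b ≤ #L) :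
    1 + slack b ≤ ∑ i ∈ L, slack (s i) := by
  have hsumR : ∑ i ∈ L, ((s i).choose 2 : ℝ) = b.choose 2 := by exact_mod_cast hsum
  have hbR : (8 : ℝ) ≤ b := by exact_mod_cast hb
  have hcardR : (b : ℝ) ≤ #L := by exact_mod_cast hcard
  have hden : ∑ i ∈ L, (2 * ((s i).choose 2 : ℝ) + 1) = b * (b - 1) + #L := by
    rw [sum_add_distrib, ← mul_sum, hsumR, Nat.cast_choose_two]
    simp only [sum_const, nsmul_eq_mul, mul_one]
    ring
  -- Cauchy–Schwarz, and `b (b - 1) ≤ k (k - 1)` for `k = #L`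
  have hCS : 1 ≤ ∑ i ∈ L, 1 / (2 * ((s i).choose 2 : ℝ) + 1) :=
    calc (1 : ℝ) ≤ (#L : ℝ) ^ 2 / (b * (b - 1) + #L) := by
          rw [le_div_iff₀ (by nlinarith)]
          nlinarith
      _ = (∑ i ∈ L, (1 : ℝ)) ^ 2 / ∑ i ∈ L, (2 * ((s i).choose 2 : ℝ) + 1) := by
          rw [hden]
          simp
      _ ≤ ∑ i ∈ L, 1 ^ 2 / (2 * ((s i).choose 2 : ℝ) + 1) :=
          sq_sum_div_le_sum_sq_div L _ fun i _ => by positivity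
      _ = ∑ i ∈ L, 1 / (2 * ((s i).choose 2 : ℝ) + 1) := by simp
  have hslack_b : slack b ≤ 1.0241 / 57 := by
    have h28 : (28 : ℝ) ≤ b.choose 2 := by
      exact_mod_cast (Nat.choose_le_choose 2 hb : Nat.choose 8 2 ≤ _)
    rw [slack_of_three_le (by omega)]
    exact div_le_div_of_nonneg_left (by norm_num) (by norm_num) (by linarith)
  calc 1 + slack b ≤ 1.0241 * 1 := by linarith
    _ ≤ 1.0241 * ∑ i ∈ L, 1 / (2 * ((s i).choose 2 : ℝ) + 1) := by gcongr
    _ = ∑ i ∈ L, 1.0241 / (2 * ((s i).choose 2 : ℝ) + 1) := by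
        rw [mul_sum]
        simp only [mul_one_div]
    _ ≤ ∑ i ∈ L, slack (s i) := sum_le_sum fun i hi => div_le_slack (hs i hi)

lemma one_add_slack_le_sum_slack (hb : 3 ≤ b) (hs : ∀ i ∈ L, 2 ≤ s i)
    (hsum : ∑ i ∈ L, (s i).choose 2 = b.choose 2) (hcard : b ≤ #L) :
    1 + slack b ≤ ∑ i ∈ L, slack (s i) := by
  rcases le_or_gt b 7 with hb7 | hb8
  · exact one_add_slack_le_sum_slack_of_le_seven hb hb7 hs hsum hcard
  · exact one_add_slack_le_sum_slack_of_eight_le hb8 hs hsum hcard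

end Slack

section Main

variable [DecidableEq α]

lemma one_add_slack_le_sum_slack_of_sum_choose_two_eq {S : Finset α} {L : Finset (Finset α)}
    (hS : 2 ≤ #S) (hsub : ∀ l ∈ L, l ⊂ S) (h2 : ∀ l ∈ L, 2 ≤ #l)
    (hL : (L : Set (Finset α)).Pairwise fun l l' => #(l ∩ l') ≤ 1)
    (hsum : ∑ l ∈ L, (#l).choose 2 = (#S).choose 2) :
    1 + slack #S ≤ ∑ l ∈ L, slack #l := by
  have hsub' : ∀ l ∈ L, l ⊆ S := fun l hl => (hsub l hl).subset
  obtain ⟨l, hl⟩ : L.Nonempty := by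
    rw [nonempty_iff_ne_empty]
    rintro rfl
    have := Nat.choose_pos (k := 2) hS
    rw [sum_empty] at hsum
    omega
  have hS3 : 3 ≤ #S := (h2 l hl).trans_lt (card_lt_card (hsub l hl))
  refine one_add_slack_le_sum_slack hS3 h2 hsum ?_
  exact card_le_card_of_forall_exists_mem_mem (one_lt_card_iff_nontrivial.1 (by omega)) hsub hL
    fun x hx y hy hxy => exists_mem_mem_of_sum_choose_two_eq hsub' hL hsum hx hy hxy

theorem card_add_slack_le {S : Finset α} {F : Finset (Finset α)} (hS : S ∈ F)
    (hF : IsLaminar 2 F) (h2 : ∀ A ∈ F, 2 ≤ #A) (hsub : ∀ A ∈ F, A ⊆ S) :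
    #F + slack #S ≤ 1.3821 * (#S).choose 2 := by
  set G := F.erase S
  set Mx := maximalMembers G
  have hG : IsLaminar 2 G := hF.mono (erase_subset S F)
  have h2G : ∀ A ∈ G, 2 ≤ #A := fun A hA => h2 A (mem_of_mem_erase hA)
  have hMxG : ∀ M ∈ Mx, M ∈ G := fun M hM => maximalMembers_subset G hM
  have hMxS : ∀ M ∈ Mx, M ⊂ S := fun M hM =>
    ssubset_of_subset_of_ne (hsub M (mem_of_mem_erase (hMxG M hM))) (ne_of_mem_erase (hMxG M hM))
  have hlines : (Mx : Set (Finset α)).Pairwise fun M M' => #(M ∩ M') ≤ 1 :=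
    fun M hM M' hM' hne => Nat.le_of_lt_succ (hG.card_inter_lt_of_mem_maximalMembers hM hM' hne)
  have hparts : ∀ M ∈ Mx, (#(G.filter (· ⊆ M)) : ℝ) + slack #M ≤ 1.3821 * (#M).choose 2 :=
    fun M hM =>
      have : #M < #S := card_lt_card (hMxS M hM)
      card_add_slack_le (mem_filter.2 ⟨hMxG M hM, subset_rfl⟩) (hG.mono (filter_subset _ _))
        (fun A hA => h2G A (mem_filter.1 hA).1) (fun A hA => (mem_filter.1 hA).2)
  have hcard : (#F : ℝ) = 1 + ∑ M ∈ Mx, (#(G.filter (· ⊆ M)) : ℝ) := by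
    rw [← Nat.cast_sum, ← hG.card_eq_sum_card_filter_subset h2G, card_erase_add_one hS |>.symm]
    push_cast
    ring
  have hbound : (#F : ℝ) + slack #S ≤
      1 + slack #S + 1.3821 * ∑ M ∈ Mx, ((#M).choose 2 : ℝ) - ∑ M ∈ Mx, slack #M := by
    have := sum_le_sum fun M hM => le_sub_iff_add_le.2 (hparts M hM)
    rw [sum_sub_distrib, ← mul_sum] at this
    linarith
  rcases (sum_choose_two_le (fun M hM => (hMxS M hM).subset) hlines).lt_or_eq with hlt | heq
  · have hltR : (∑ M ∈ Mx, (#M).choose 2 : ℝ) + 1 ≤ (#S).choose 2 := by exact_mod_cast hlt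
    linarith [slack_le #S, sum_nonneg fun M (_ : M ∈ Mx) => slack_nonneg #M]
  · have := one_add_slack_le_sum_slack_of_sum_choose_two_eq (h2 S hS) hMxS
      (fun M hM => h2G M (hMxG M hM)) hlines heq
    have heqR : (∑ M ∈ Mx, (#M).choose 2 : ℝ) = (#S).choose 2 := by exact_mod_cast heq
    linarith
termination_by #S

end Main

lemma exists_card_eq_f (n : ℕ) :
    ∃ F : Finset (Finset (Fin n)), IsLaminar 2 F ∧ (∀ A ∈ F, 2 ≤ #A) ∧ #F = f n := by
  unfold f
  refine Nat.sSup_mem (s := {m | ∃ F : Finset (Finset (Fin n)), IsLaminar 2 F ∧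
    (∀ A ∈ F, 2 ≤ #A) ∧ #F = m}) ⟨0, ∅, by simp [IsLaminar], by simp, rfl⟩ ?_
  exact ⟨_, fun _ ⟨F, _, _, hF⟩ => hF ▸ card_le_univ F⟩

lemma f_le {n : ℕ} (hn : 2 ≤ n) : (f n : ℝ) ≤ 1.3821 * n.choose 2 := by
  obtain ⟨F, hF, h2, hcard⟩ := exists_card_eq_f n
  have hroot := card_add_slack_le (mem_insert_self univ F)
    (hF.insert_of_forall_subset fun A _ => subset_univ A)
    (by simpa [forall_mem_insert] using ⟨hn, h2⟩) fun A _ => subset_univ A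
  have hFF : (#F : ℝ) ≤ #(insert univ F) := by exact_mod_cast card_le_card (subset_insert univ F)
  simp only [card_univ, Fintype.card_fin] at hroot
  rw [← hcard]
  linarith [slack_nonneg n]

/-- limsup of f(n)/C(n,2) is at most 1.3821. -/
theorem limsup_f_le :
    Filter.limsup (fun n : ℕ => (f n : ℝ) / (n.choose 2 : ℝ)) Filter.atTop ≤ (1.3821 : ℝ) := by
  refine Filter.limsup_le_of_le (Filter.isCoboundedUnder_le_of_eventually_le _
    (Filter.Eventually.of_forall fun n => by positivity)) ?_
  filter_upwards [Filter.eventually_ge_atTop 2] with n hn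
  rw [div_le_iff₀ (by exact_mod_cast Nat.choose_pos hn)]
  exact f_le hn
end

section
/- Let f(n) denote the maximum number of sets of cardinality at least 2 in a 2-laminar family of subsets of [n]. Then for all n > 2, f(n) ≤ 2·binom(n,2). -/
/-!
Call a pair covered by `F` if it lies in some member of `F`. For a 2-laminar family `F` of sets
of size at least 2 we show, by strong induction on `F`, that `|F| + #(maximal members)` is at most
twice the number of covered pairs; this bounds `|F|` by `2 · C(n, 2)`.

Distinct maximal members meet in at most one point, so `F` splits into the families below its
maximal members and the pairs inside distinct maximal members are distinct. For a maximal `M`,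
the members strictly below `M` form a smaller family `H`. If `H` has two maximal members, the
induction hypothesis for `H` suffices; if it has a single one `M₁ ⊊ M`, every pair covered by
`H` lies in `M₁`, so `H` misses a pair of `M`, which pays for the extra set `M`.
-/

open Finset

theorem Nat.choose_two_lt_choose_two {a b : ℕ} (hab : a < b) (hb : 2 ≤ b) :
    a.choose 2 < b.choose 2 := by
  obtain ⟨c, rfl⟩ : ∃ c, b = c + 1 := ⟨b - 1, by omega⟩
  calc a.choose 2 ≤ c.choose 2 := Nat.choose_le_choose 2 (by omega)
    _ < c.choose 1 + c.choose 2 := by rw [Nat.choose_one_right]; omega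
    _ = (c + 1).choose 2 := (Nat.choose_succ_succ c 1).symm

namespace Finset

variable {α : Type*}

section Maximals

open Classical in
noncomputable def maximals (F : Finset (Finset α)) : Finset (Finset α) :=
  {M ∈ F | Maximal (· ∈ F) M}

variable {F : Finset (Finset α)} {A M : Finset α}

theorem mem_maximals : M ∈ maximals F ↔ Maximal (· ∈ F) M := by
  simp only [maximals, mem_filter, and_iff_right_iff_imp]
  exact Maximal.prop

theorem exists_mem_maximals_superset (hA : A ∈ F) : ∃ M ∈ maximals F, A ⊆ M := by
  obtain ⟨M, hAM, hM⟩ := F.exists_le_maximal hA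
  exact ⟨M, mem_maximals.2 hM, hAM⟩

theorem maximals_subset : maximals F ⊆ F := fun _ hM => (mem_maximals.1 hM).prop

end Maximals

variable [DecidableEq α] {t : ℕ} {F G : Finset (Finset α)} {M M₁ M₂ X : Finset α}

def IsLaminar (t : ℕ) (F : Finset (Finset α)) : Prop :=
  ∀ A ∈ F, ∀ B ∈ F, t ≤ #(A ∩ B) → A ⊆ B ∨ B ⊆ A

theorem IsLaminar.mono (hG : G.IsLaminar t) (h : F ⊆ G) : F.IsLaminar t :=
  fun A hA B hB => hG A (h hA) B (h hB)

theorem IsLaminar.card_lt_of_subset_maximals (hF : F.IsLaminar t)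
    (hM₁ : M₁ ∈ maximals F) (hM₂ : M₂ ∈ maximals F) (hne : M₁ ≠ M₂) (hX₁ : X ⊆ M₁)
    (hX₂ : X ⊆ M₂) : #X < t := by
  rw [mem_maximals] at hM₁ hM₂
  by_contra! hX
  have hinter : t ≤ #(M₁ ∩ M₂) := hX.trans (card_le_card (subset_inter hX₁ hX₂))
  rcases hF M₁ hM₁.prop M₂ hM₂.prop hinter with h | h
  · exact hne (hM₁.eq_of_le hM₂.prop h)
  · exact hne (hM₂.eq_of_le hM₁.prop h).symm

theorem card_filter_subset_eq_card_filter_ssubset_add_one (hM : M ∈ F) :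
    #{A ∈ F | A ⊆ M} = #{A ∈ F | A ⊂ M} + 1 := by
  have : {A ∈ F | A ⊆ M} = insert M {A ∈ F | A ⊂ M} := by
    ext A
    simp only [mem_insert, mem_filter]
    constructor
    · rintro ⟨hA, hAM⟩
      exact hAM.eq_or_ssubset.imp_right fun h => ⟨hA, h⟩
    · rintro (rfl | ⟨hA, hAM⟩)
      exacts [⟨hM, subset_rfl⟩, ⟨hA, hAM.subset⟩]
  rw [this, card_insert_of_notMem (by simp)]

theorem IsLaminar.card_eq_sum_maximals (hF : F.IsLaminar t) (ht : ∀ A ∈ F, t ≤ #A) :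
    #F = ∑ M ∈ maximals F, (#{A ∈ F | A ⊂ M} + 1) := by
  have hF_eq : F = (maximals F).biUnion fun M => {A ∈ F | A ⊆ M} := by
    ext A
    simp only [mem_biUnion, mem_filter]
    constructor
    · intro hA
      obtain ⟨M, hM, hAM⟩ := exists_mem_maximals_superset hA
      exact ⟨M, hM, hA, hAM⟩
    · rintro ⟨-, -, hA, -⟩
      exact hA
  have hdisj : (maximals F : Set (Finset α)).PairwiseDisjoint fun M => {A ∈ F | A ⊆ M} := by
    intro M₁ hM₁ M₂ hM₂ hne
    refine disjoint_left.2 fun A hA₁ hA₂ => ?_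
    rw [mem_filter] at hA₁ hA₂
    exact (ht A hA₁.1).not_gt (hF.card_lt_of_subset_maximals hM₁ hM₂ hne hA₁.2 hA₂.2)
  conv_lhs => rw [hF_eq]
  rw [card_biUnion hdisj]
  exact sum_congr rfl fun M hM =>
    card_filter_subset_eq_card_filter_ssubset_add_one (maximals_subset hM)

def coveredPairs (F : Finset (Finset α)) : Finset (Finset α) :=
  F.biUnion (powersetCard 2)

theorem coveredPairs_subset_powersetCard (h : ∀ A ∈ F, A ⊆ M) :
    coveredPairs F ⊆ M.powersetCard 2 :=
  biUnion_subset.2 fun A hA => powersetCard_mono (h A hA)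

theorem IsLaminar.sum_choose_two_maximals_le (hF : F.IsLaminar 2) :
    ∑ M ∈ maximals F, (#M).choose 2 ≤ #(coveredPairs F) := by
  have hdisj : (maximals F : Set (Finset α)).PairwiseDisjoint (powersetCard 2) := by
    intro M₁ hM₁ M₂ hM₂ hne
    refine disjoint_left.2 fun p hp₁ hp₂ => ?_
    rw [mem_powersetCard] at hp₁ hp₂
    exact (hF.card_lt_of_subset_maximals hM₁ hM₂ hne hp₁.1 hp₂.1).ne hp₁.2
  simp_rw [← card_powersetCard]
  rw [← card_biUnion hdisj]
  exact card_le_card (biUnion_subset_biUnion_of_subset_left _ maximals_subset)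

theorem card_add_two_le_of_forall_ssubset {H : Finset (Finset α)} (hM : 2 ≤ #M)
    (hH : ∀ A ∈ H, A ⊂ M) (hbound : #H + #(maximals H) ≤ 2 * #(coveredPairs H)) :
    #H + 2 ≤ 2 * (#M).choose 2 := by
  rcases H.eq_empty_or_nonempty with rfl | ⟨A, hA⟩
  · have := Nat.choose_pos hM
    simp only [card_empty]
    omega
  have hcov : #(coveredPairs H) ≤ (#M).choose 2 := by
    simpa using card_le_card (coveredPairs_subset_powersetCard fun A hA => (hH A hA).subset)
  obtain ⟨M₁, hM₁, -⟩ := exists_mem_maximals_superset hA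
  have hpos : 0 < #(maximals H) := card_pos.2 ⟨M₁, hM₁⟩
  by_cases htwo : 2 ≤ #(maximals H)
  · omega
  have hbelow : ∀ B ∈ H, B ⊆ M₁ := by
    intro B hB
    obtain ⟨M', hM', hBM'⟩ := exists_mem_maximals_superset hB
    rwa [card_le_one.1 (by omega) M' hM' M₁ hM₁] at hBM'
  have hcov₁ : #(coveredPairs H) < (#M).choose 2 := by
    calc #(coveredPairs H) ≤ (#M₁).choose 2 := by
          simpa using card_le_card (coveredPairs_subset_powersetCard hbelow)
      _ < (#M).choose 2 :=
          Nat.choose_two_lt_choose_two (card_lt_card (hH M₁ (maximals_subset hM₁))) hM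
  omega

theorem IsLaminar.card_add_card_maximals_le (hF : F.IsLaminar 2) (h2 : ∀ A ∈ F, 2 ≤ #A) :
    #F + #(maximals F) ≤ 2 * #(coveredPairs F) := by
  induction F using Finset.strongInduction with
  | H F ih =>
  have hgroup : ∀ M ∈ maximals F, #{A ∈ F | A ⊂ M} + 2 ≤ 2 * (#M).choose 2 := by
    intro M hM
    have hMF : M ∈ F := maximals_subset hM
    have hsub : {A ∈ F | A ⊂ M} ⊂ F := filter_ssubset.2 ⟨M, hMF, ssubset_irrefl M⟩
    exact card_add_two_le_of_forall_ssubset (h2 M hMF) (fun A hA => (mem_filter.1 hA).2)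
      (ih _ hsub (hF.mono hsub.subset) fun A hA => h2 A (hsub.subset hA))
  calc #F + #(maximals F) = ∑ M ∈ maximals F, (#{A ∈ F | A ⊂ M} + 2) := by
        rw [hF.card_eq_sum_maximals h2, card_eq_sum_ones (maximals F), ← sum_add_distrib]
    _ ≤ ∑ M ∈ maximals F, 2 * (#M).choose 2 := sum_le_sum hgroup
    _ = 2 * ∑ M ∈ maximals F, (#M).choose 2 := (mul_sum _ _ _).symm
    _ ≤ 2 * #(coveredPairs F) := Nat.mul_le_mul_left 2 hF.sum_choose_two_maximals_le

end Finset

theorem f_le_two_choose_general (n : ℕ) : f n ≤ 2 * n.choose 2 := by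
  refine csSup_le ⟨0, ∅, by simp⟩ ?_
  rintro m ⟨F, hF, h2, rfl⟩
  have hpairs : #(coveredPairs F) ≤ n.choose 2 := by
    simpa using card_le_card
      (coveredPairs_subset_powersetCard (F := F) (M := univ) fun A _ => subset_univ A)
  have := IsLaminar.card_add_card_maximals_le hF h2
  omega

/-- For all n > 2, f(n) ≤ 2·C(n,2). -/
theorem f_le_two_choose (n : ℕ) (hn : 2 < n) : f n ≤ 2 * n.choose 2 :=
  f_le_two_choose_general n
end
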